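/- arXiv:2409.04069 — 2 statements merged into one kernel-verified Lean document; each statement's English description precedes it below -/
import Mathlib

section
/- Exp-concavity of the square loss (Lemma 2): Let n ≥ 1, let y ∈ ℝⁿ and let C > 0. Then the function x ↦ exp(-‖x - y‖²/(2C)) is concave on the closed set {x ∈ ℝⁿ : ‖x - y‖² ≤ C} (equivalently, the square loss x ↦ ‖x - y‖² restricted to this set is (2C)⁻¹-exp-concave). -/
open Real

lemma aux_quad_concave (A B D C : ℝ) (hC : 0 < C) (hA : 0 ≤ A) (hB : B ^ 2 ≤ 4 * A * D)
    (hq : ∀ t ∈ Set.Icc (0 : ℝ) 1, A * t ^ 2 + B * t + D ≤ C) :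
    ConcaveOn ℝ (Set.Icc (0 : ℝ) 1)
      (fun t => Real.exp (-(A * t ^ 2 + B * t + D) / (2 * C))) := by
  have hg : ∀ t : ℝ, HasDerivAt (fun t => -(A * t ^ 2 + B * t + D) / (2 * C))
      (-(2 * A * t + B) / (2 * C)) t := by
    intro t
    have h1 : HasDerivAt (fun t : ℝ => A * t ^ 2 + B * t + D) (2 * A * t + B) t := by
      have := (((hasDerivAt_pow 2 t).const_mul A).add ((hasDerivAt_id t).const_mul B)).add_const D
      simpa [mul_comm, mul_assoc, mul_left_comm] using this
    simpa [neg_div] using (h1.neg.div_const (2 * C))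
  have hf' : ∀ t : ℝ, HasDerivAt (fun t => Real.exp (-(A * t ^ 2 + B * t + D) / (2 * C)))
      (Real.exp (-(A * t ^ 2 + B * t + D) / (2 * C)) * (-(2 * A * t + B) / (2 * C))) t :=
    fun t => (hg t).exp
  have hf'' : ∀ t : ℝ, HasDerivAt
      (fun t => Real.exp (-(A * t ^ 2 + B * t + D) / (2 * C)) * (-(2 * A * t + B) / (2 * C)))
      (Real.exp (-(A * t ^ 2 + B * t + D) / (2 * C)) * (-(2 * A * t + B) / (2 * C)) *
          (-(2 * A * t + B) / (2 * C)) +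
        Real.exp (-(A * t ^ 2 + B * t + D) / (2 * C)) * (-(2 * A) / (2 * C))) t := by
    intro t
    have h2 : HasDerivAt (fun t : ℝ => -(2 * A * t + B) / (2 * C)) (-(2 * A) / (2 * C)) t := by
      have : HasDerivAt (fun t : ℝ => 2 * A * t + B) (2 * A) t := by
        simpa using ((hasDerivAt_id t).const_mul (2 * A)).add_const B
      simpa [neg_div] using this.neg.div_const (2 * C)
    exact (hf' t).mul h2
  apply concaveOn_of_hasDerivWithinAt2_nonpos (convex_Icc 0 1)
      (f' := fun t => Real.exp (-(A * t ^ 2 + B * t + D) / (2 * C)) * (-(2 * A * t + B) / (2 * C)))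
      (f'' := fun t => Real.exp (-(A * t ^ 2 + B * t + D) / (2 * C)) * (-(2 * A * t + B) / (2 * C)) *
          (-(2 * A * t + B) / (2 * C)) +
        Real.exp (-(A * t ^ 2 + B * t + D) / (2 * C)) * (-(2 * A) / (2 * C)))
  · exact (Real.continuous_exp.comp (by continuity)).continuousOn
  · exact fun t _ => (hf' t).hasDerivWithinAt
  · exact fun t _ => (hf'' t).hasDerivWithinAt
  · intro t ht
    rw [interior_Icc] at ht
    have htI : t ∈ Set.Icc (0 : ℝ) 1 := ⟨le_of_lt ht.1, le_of_lt ht.2⟩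
    have hqt : A * t ^ 2 + B * t + D ≤ C := hq t htI
    have key : (2 * A * t + B) ^ 2 ≤ 4 * A * C := by
      nlinarith [sq_nonneg (2 * A * t + B)]
    set E := Real.exp (-(A * t ^ 2 + B * t + D) / (2 * C)) with hE
    have hEpos : 0 < E := Real.exp_pos _
    have heq : E * (-(2 * A * t + B) / (2 * C)) * (-(2 * A * t + B) / (2 * C)) +
        E * (-(2 * A) / (2 * C)) = E * ((2 * A * t + B) ^ 2 - 4 * A * C) / (4 * C ^ 2) := by
      field_simp
      ring
    rw [heq]
    apply div_nonpos_of_nonpos_of_nonneg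
    · exact mul_nonpos_of_nonneg_of_nonpos hEpos.le (by linarith)
    · positivity

/-- Exp-concavity of the square loss (Lemma 2): for `y ∈ ℝⁿ` and `C > 0`, the map
`x ↦ exp(-‖x - y‖² / (2C))` is concave on the set `{x : ‖x - y‖² ≤ C}`; i.e. the square
loss restricted to this set is `(2C)⁻¹`-exp-concave. -/
theorem square_loss_exp_concave (n : ℕ) (hn : 1 ≤ n) (y : EuclideanSpace ℝ (Fin n))
    (C : ℝ) (hC : 0 < C) :
    ConcaveOn ℝ {x : EuclideanSpace ℝ (Fin n) | ‖x - y‖ ^ 2 ≤ C}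
      (fun x => Real.exp (-(‖x - y‖ ^ 2) / (2 * C))) := by
  constructor
  · -- convexity of the set
    intro a ha b hb p q hp hq hpq
    simp only [Set.mem_setOf_eq] at *
    have hCnn : (0:ℝ) ≤ C := hC.le
    have ha' : ‖a - y‖ ≤ Real.sqrt C := by
      rw [← Real.sqrt_sq (norm_nonneg (a - y))]
      exact Real.sqrt_le_sqrt ha
    have hb' : ‖b - y‖ ≤ Real.sqrt C := by
      rw [← Real.sqrt_sq (norm_nonneg (b - y))]
      exact Real.sqrt_le_sqrt hb
    have hrw : p • a + q • b - y = p • (a - y) + q • (b - y) := by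
      have h1 : p • (a - y) + q • (b - y) = p • a + q • b - (p + q) • y := by
        rw [add_smul, smul_sub, smul_sub]; abel
      rw [h1, hpq, one_smul]
    rw [hrw]
    have hle : ‖p • (a - y) + q • (b - y)‖ ≤ Real.sqrt C :=
      calc ‖p • (a - y) + q • (b - y)‖ ≤ p * ‖a - y‖ + q * ‖b - y‖ := by
            refine (norm_add_le _ _).trans ?_
            rw [norm_smul, norm_smul, Real.norm_of_nonneg hp, Real.norm_of_nonneg hq]
        _ ≤ p * Real.sqrt C + q * Real.sqrt C := by gcongr
        _ = Real.sqrt C := by rw [← add_mul, hpq, one_mul]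
    calc ‖p • (a - y) + q • (b - y)‖ ^ 2 ≤ Real.sqrt C ^ 2 :=
          pow_le_pow_left₀ (norm_nonneg _) hle 2
      _ = C := Real.sq_sqrt hCnn
  · intro a ha b hb p q hp hq' hpq
    simp only [Set.mem_setOf_eq] at ha hb
    set u : EuclideanSpace ℝ (Fin n) := a - y with hu
    set v : EuclideanSpace ℝ (Fin n) := b - a with hv
    set A := ‖v‖ ^ 2 with hA
    set B := 2 * (inner ℝ u v : ℝ) with hB
    set D := ‖u‖ ^ 2 with hD
    have hexpand : ∀ t : ℝ, ‖u + t • v‖ ^ 2 = A * t ^ 2 + B * t + D := by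
      intro t
      have h := @norm_add_sq_real (EuclideanSpace ℝ (Fin n)) _ _ u (t • v)
      rw [h, real_inner_smul_right, norm_smul, Real.norm_eq_abs, mul_pow, sq_abs]
      ring
    have hquv : ‖u + v‖ ^ 2 ≤ C := by
      have huv : u + v = b - y := by rw [hu, hv]; abel
      rw [huv]; exact hb
    have hAnn : (0:ℝ) ≤ A := sq_nonneg _
    have hBD : B ^ 2 ≤ 4 * A * D := by
      have habs := abs_real_inner_le_norm u v
      have h2 : (inner ℝ u v : ℝ) ^ 2 ≤ ‖u‖ ^ 2 * ‖v‖ ^ 2 := by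
        rw [← mul_pow]
        calc (inner ℝ u v : ℝ) ^ 2 = |(inner ℝ u v : ℝ)| ^ 2 := (sq_abs _).symm
          _ ≤ (‖u‖ * ‖v‖) ^ 2 := pow_le_pow_left₀ (abs_nonneg _) habs 2
      rw [hB, hA, hD]; nlinarith
    have hqbound : ∀ t ∈ Set.Icc (0:ℝ) 1, A * t ^ 2 + B * t + D ≤ C := by
      intro t ht
      rw [← hexpand]
      have h1 : u + t • v = (1 - t) • u + t • (u + v) := by
        rw [smul_add, sub_smul, one_smul]; abel
      have hCnn : (0:ℝ) ≤ C := hC.le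
      have hu' : ‖u‖ ≤ Real.sqrt C := by
        rw [← Real.sqrt_sq (norm_nonneg u)]
        exact Real.sqrt_le_sqrt ha
      have huv' : ‖u + v‖ ≤ Real.sqrt C := by
        rw [← Real.sqrt_sq (norm_nonneg (u + v))]
        exact Real.sqrt_le_sqrt hquv
      have hle : ‖u + t • v‖ ≤ Real.sqrt C := by
        rw [h1]
        calc ‖(1 - t) • u + t • (u + v)‖ ≤ (1 - t) * ‖u‖ + t * ‖u + v‖ := by
              refine (norm_add_le _ _).trans ?_
              rw [norm_smul, norm_smul, Real.norm_of_nonneg (by linarith [ht.2]),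
                Real.norm_of_nonneg ht.1]
          _ ≤ (1 - t) * Real.sqrt C + t * Real.sqrt C := by
              gcongr
              · linarith [ht.2]
              · exact ht.1
          _ = Real.sqrt C := by ring
      calc ‖u + t • v‖ ^ 2 ≤ Real.sqrt C ^ 2 := pow_le_pow_left₀ (norm_nonneg _) hle 2
        _ = C := Real.sq_sqrt hCnn
    have hconc := aux_quad_concave A B D C hC hAnn hBD hqbound
    have h01 : (0:ℝ) ∈ Set.Icc (0:ℝ) 1 := by norm_num
    have h11 : (1:ℝ) ∈ Set.Icc (0:ℝ) 1 := by norm_num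
    have hkey := hconc.2 h01 h11 hp hq' hpq
    simp only [smul_eq_mul, mul_zero, mul_one, zero_add] at hkey
    have hpt : p • a + q • b - y = u + q • v := by
      have hp1 : p = 1 - q := by linarith
      rw [hu, hv, hp1, smul_sub, sub_smul, one_smul]
      abel
    have e0 : ‖a - y‖ ^ 2 = A * (0:ℝ) ^ 2 + B * 0 + D := by
      have h := hexpand 0
      simp only [zero_smul, add_zero] at h
      rw [← hu] at *
      rw [← h]
    have e1 : ‖b - y‖ ^ 2 = A * (1:ℝ) ^ 2 + B * 1 + D := by
      have h := hexpand 1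
      rw [one_smul] at h
      have huv : u + v = b - y := by rw [hu, hv]; abel
      rw [← h, huv]
    have eq : ‖p • a + q • b - y‖ ^ 2 = A * q ^ 2 + B * q + D := by
      rw [hpt, hexpand]
    simp only [eq, e0, e1]
    convert hkey using 3 <;> ring
end

section
/- Regret of prediction with expert advice under exp-concave losses (Lemma 1): Let s ⊆ ℝⁿ be a convex set, let α > 0, and for each t = 1,…,T let ℓ_t : s → ℝ be nonnegative and such that exp(-α ℓ_t) is concave on s. Let expert predictions r̂_{t,i} ∈ s for i = 1,…,N be given, let the weights w_{t,i} be generated by the exponential-weights recursion with learning rate λ = α and uniform initialization w_{1,i} = 1/N using losses ℓ_{t,i} = ℓ_t(r̂_{t,i}), and let the aggregate prediction be r̂_t = Σᵢ w_{t,i} r̂_{t,i}. Then the cumulative loss satisfies Σ_{t=1}^{T} ℓ_t(r̂_t) ≤ minᵢ Σ_{t=1}^{T} ℓ_t(r̂_{t,i}) + (1/α) · log N. -/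
/-- Regret of prediction with expert advice under exp-concave losses (Lemma 1):
if each loss `ℓ_t` is nonnegative and `α`-exp-concave on a convex set `s`, the expert
predictions lie in `s`, the weights follow the exponential-weights recursion with
learning rate `λ = α` and uniform initialization, and the aggregate prediction is
`r̂_t = Σᵢ w_{t,i} r̂_{t,i}`, then
`Σ_{t=1}^T ℓ_t(r̂_t) ≤ minᵢ Σ_{t=1}^T ℓ_t(r̂_{t,i}) + (1/α) log N`. -/
theorem expert_advice_regret (n N T : ℕ) (hN : 1 ≤ N)
    (s : Set (EuclideanSpace ℝ (Fin n))) (hs : Convex ℝ s)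
    (α : ℝ) (hα : 0 < α)
    (ℓ : ℕ → EuclideanSpace ℝ (Fin n) → ℝ)
    (hnonneg : ∀ t ∈ Finset.Icc 1 T, ∀ x ∈ s, 0 ≤ ℓ t x)
    (hconc : ∀ t ∈ Finset.Icc 1 T, ConcaveOn ℝ s (fun x => Real.exp (-α * ℓ t x)))
    (rhat : ℕ → Fin N → EuclideanSpace ℝ (Fin n))
    (hrhat : ∀ t ∈ Finset.Icc 1 T, ∀ i, rhat t i ∈ s)
    (w : ℕ → Fin N → ℝ) (hw1 : ∀ i, w 1 i = 1 / N)
    (hwrec : ∀ t, 1 ≤ t → ∀ i,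
      w (t + 1) i = w t i * Real.exp (-α * ℓ t (rhat t i)) /
        ∑ j, w t j * Real.exp (-α * ℓ t (rhat t j))) :
    ∑ t ∈ Finset.Icc 1 T, ℓ t (∑ i, w t i • rhat t i) ≤
      Finset.univ.inf' ⟨⟨0, hN⟩, Finset.mem_univ _⟩
          (fun i => ∑ t ∈ Finset.Icc 1 T, ℓ t (rhat t i))
        + (1 / α) * Real.log N := by
  have hNpos : (0:ℝ) < N := by exact_mod_cast hN
  have hne : (Finset.univ : Finset (Fin N)).Nonempty := ⟨⟨0, hN⟩, Finset.mem_univ _⟩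
  -- cumulative losses and partition functions
  set S : ℕ → Fin N → ℝ := fun m i => ∑ t ∈ Finset.Icc 1 m, ℓ t (rhat t i) with hSdef
  set Z : ℕ → ℝ := fun m => ∑ j, Real.exp (-α * S m j) with hZdef
  have hZpos : ∀ m, 0 < Z m := fun m =>
    Finset.sum_pos (fun j _ => Real.exp_pos _) hne
  have hS0 : ∀ i, S 0 i = 0 := by intro i; simp [hSdef]
  have hZ0 : Z 0 = N := by
    simp [hZdef, hS0, Finset.card_univ]
  have hSsucc : ∀ t, 1 ≤ t → ∀ i, S t i = S (t-1) i + ℓ t (rhat t i) := by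
    intro t ht i
    obtain ⟨m, rfl⟩ := Nat.exists_eq_add_of_le ht
    simp only [hSdef, Nat.add_sub_cancel_left, Nat.add_comm 1 m]
    rw [Finset.sum_Icc_succ_top (Nat.le_add_left 1 m)]
    simp
  -- explicit form of weights
  have hform : ∀ t, 1 ≤ t → ∀ i, w t i = Real.exp (-α * S (t-1) i) / Z (t-1) := by
    intro t ht
    induction t with
    | zero => omega
    | succ t ih =>
      rcases Nat.eq_or_lt_of_le ht with h1 | h1
      · intro i
        rw [← h1] at *
        simp [hw1, hS0, hZ0]
      · have ht1 : 1 ≤ t := by omega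
        intro i
        have hrec := hwrec t ht1 i
        have hsum : ∑ j, w t j * Real.exp (-α * ℓ t (rhat t j)) = Z t / Z (t-1) := by
          rw [Finset.sum_div]
          refine Finset.sum_congr rfl fun j _ => ?_
          rw [ih ht1 j, hSsucc t ht1 j, neg_mul, neg_mul, neg_mul, mul_add, neg_add,
            Real.exp_add]
          ring
        simp only [Nat.add_sub_cancel]
        rw [hrec, hsum, ih ht1 i, hSsucc t ht1 i]
        have h1 : Z (t-1) ≠ 0 := (hZpos _).ne'
        have h2 : Z t ≠ 0 := (hZpos _).ne'
        rw [neg_mul, neg_mul, neg_mul, mul_add, neg_add, Real.exp_add]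
        field_simp
  have hwpos : ∀ t, 1 ≤ t → ∀ i, 0 ≤ w t i := by
    intro t ht i
    rw [hform t ht i]
    positivity
  have hwsum : ∀ t, 1 ≤ t → ∑ i, w t i = 1 := by
    intro t ht
    have : ∑ i, w t i = Z (t-1) / Z (t-1) := by
      rw [Finset.sum_div]
      exact Finset.sum_congr rfl fun i _ => hform t ht i
    rw [this, div_self (hZpos _).ne']
  -- per-step bound
  have hstep : ∀ t ∈ Finset.Icc 1 T,
      ℓ t (∑ i, w t i • rhat t i) ≤
        (1/α) * (Real.log (Z (t-1)) - Real.log (Z t)) := by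
    intro t htmem
    have ht : 1 ≤ t := (Finset.mem_Icc.mp htmem).1
    have hmem : ∀ i ∈ (Finset.univ : Finset (Fin N)), rhat t i ∈ s :=
      fun i _ => hrhat t htmem i
    have hjensen := (hconc t htmem).le_map_sum (fun i _ => hwpos t ht i)
      (hwsum t ht) hmem
    have hsum : ∑ i, w t i • Real.exp (-α * ℓ t (rhat t i)) = Z t / Z (t-1) := by
      rw [Finset.sum_div]
      refine Finset.sum_congr rfl fun j _ => ?_
      rw [smul_eq_mul, hform t ht j, hSsucc t ht j, neg_mul, neg_mul, neg_mul, mul_add,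
        neg_add, Real.exp_add]
      ring
    rw [hsum] at hjensen
    have hlog : Real.log (Z t / Z (t-1)) ≤ -α * ℓ t (∑ i, w t i • rhat t i) := by
      calc Real.log (Z t / Z (t-1)) ≤
          Real.log (Real.exp (-α * ℓ t (∑ i, w t i • rhat t i))) :=
            Real.log_le_log (div_pos (hZpos _) (hZpos _)) hjensen
        _ = -α * ℓ t (∑ i, w t i • rhat t i) := Real.log_exp _
    rw [Real.log_div (hZpos t).ne' (hZpos (t-1)).ne'] at hlog
    rw [div_mul_eq_mul_div, le_div_iff₀ hα]
    nlinarith [hlog]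
  -- sum and telescope
  have htel : ∑ t ∈ Finset.Icc 1 T, (1/α) * (Real.log (Z (t-1)) - Real.log (Z t)) =
      (1/α) * (Real.log (Z 0) - Real.log (Z T)) := by
    rw [← Finset.mul_sum]
    congr 1
    have key : ∀ M : ℕ, ∑ t ∈ Finset.Icc 1 M, (Real.log (Z (t-1)) - Real.log (Z t)) =
        Real.log (Z 0) - Real.log (Z M) := by
      intro M
      induction M with
      | zero => simp
      | succ m ih =>
        rw [Finset.sum_Icc_succ_top (Nat.le_add_left 1 m), ih]
        simp only [Nat.add_sub_cancel]
        ring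
    exact key T
  have hmain : ∑ t ∈ Finset.Icc 1 T, ℓ t (∑ i, w t i • rhat t i) ≤
      (1/α) * (Real.log (Z 0) - Real.log (Z T)) := by
    rw [← htel]
    exact Finset.sum_le_sum hstep
  refine hmain.trans ?_
  obtain ⟨i, -, heq⟩ := Finset.exists_mem_eq_inf' (H := hne)
    (fun i => ∑ t ∈ Finset.Icc 1 T, ℓ t (rhat t i))
  rw [heq]
  have hZT : Real.exp (-α * S T i) ≤ Z T :=
    Finset.single_le_sum (f := fun j => Real.exp (-α * S T j))
      (fun j _ => (Real.exp_pos _).le) (Finset.mem_univ i)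
  have hlogZT : -α * S T i ≤ Real.log (Z T) := by
    calc -α * S T i = Real.log (Real.exp (-α * S T i)) := (Real.log_exp _).symm
      _ ≤ Real.log (Z T) := Real.log_le_log (Real.exp_pos _) hZT
  rw [hZ0]
  have h1α : (0:ℝ) < 1/α := by positivity
  have : (1/α) * (Real.log N - Real.log (Z T)) ≤
      (1/α) * (Real.log N + α * S T i) := by
    apply mul_le_mul_of_nonneg_left _ h1α.le
    linarith
  refine this.trans ?_
  rw [mul_add]
  have : (1/α) * (α * S T i) = S T i := by field_simp
  rw [this]
  linarith [le_refl (S T i)]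
end
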